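/- lim_{s→1⁺} ( (2/π)·ζ(s)·L(s,χ) - ζ(2s-1) ) = (1/π)·∫₀^∞ (log t)/cosh t dt, where χ is the nontrivial Dirichlet character mod 4. -/

import Mathlib

open Filter

/-- The nontrivial Dirichlet character mod 4, as a function on ℕ. -/
def chi4 (d : ℕ) : ℝ :=
  if d % 4 = 1 then 1 else if d % 4 = 3 then -1 else 0

/-!
Expanding `1 / cosh t = 2 ∑ₖ (e^{-(4k+1)t} - e^{-(4k+3)t})` and integrating termwise against
`t^{x-1}` shows that the Mellin transform `M(x) = ∫₀^∞ t^{x-1} / cosh t` equals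
`2 Γ(x) L(x, χ)` for `x > 1`. Since `M` is differentiable on `x > 0` with `M(1) = π / 2`
and `M'(1) = ∫₀^∞ log t / cosh t`, the quotient `M / (2 Γ)` extends `L(·, χ)`
differentiably to `1`, with `L(1, χ) = π / 4` and `L'(1, χ) = M'(1) / 2 + γ π / 4`
(as `Γ'(1) = -γ`). Writing `ζ(s) = 1 / (s - 1) + γ + o(1)`, the poles of
`(2 / π) ζ(s) L(s, χ)` and `ζ(2s - 1)` at `s = 1` cancel, and what remains tends to
`(2 / π) (γ π / 4 + L'(1, χ)) - γ = M'(1) / π`.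
-/

open Real Set Topology MeasureTheory Asymptotics

theorem hasSum_chi4_mul {f : ℕ → ℝ} (hf : Summable fun n => chi4 (n + 1) * f n) :
    HasSum (fun k => f (4 * k) - f (4 * k + 2)) (∑' n, chi4 (n + 1) * f n) := by
  refine ((Nat.divModEquiv 4).symm.hasSum_iff.mpr hf.hasSum).prod_fiberwise fun k => ?_
  have hblock :
      ∑ j : Fin 4, chi4 (k * 4 + j + 1) * f (k * 4 + j) = f (4 * k) - f (4 * k + 2) := by
    simp [Fin.sum_univ_four, chi4, Nat.add_mod, mul_comm k 4, sub_eq_add_neg]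
  rw [← hblock]
  exact hasSum_fintype _

theorem abs_chi4_le_one (n : ℕ) : |chi4 n| ≤ 1 := by
  unfold chi4; split_ifs <;> norm_num

theorem hasSum_chi4_rpow {x : ℝ} (hx : 1 < x) :
    HasSum (fun k : ℕ => (4 * k + 1 : ℝ) ^ (-x) - (4 * k + 3 : ℝ) ^ (-x))
      (∑' n : ℕ, chi4 (n + 1) * ((n : ℝ) + 1) ^ (-x)) := by
  have hsum : Summable fun n : ℕ => ((n : ℝ) + 1) ^ (-x) := by
    simpa using
      (summable_nat_add_iff 1).mpr (Real.summable_nat_rpow.mpr (by linarith : -x < -1))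
  have hchi : Summable fun n : ℕ => chi4 (n + 1) * ((n : ℝ) + 1) ^ (-x) :=
    hsum.of_norm_bounded fun n => by
      rw [norm_mul, norm_of_nonneg (by positivity : (0:ℝ) ≤ ((n : ℝ) + 1) ^ (-x))]
      exact mul_le_of_le_one_left (by positivity) (abs_chi4_le_one _)
  have hpairs := hasSum_chi4_mul hchi
  push_cast at hpairs
  simpa only [add_assoc, show (2 : ℝ) + 1 = 3 by norm_num] using hpairs

theorem hasSum_inv_cosh {t : ℝ} (ht : 0 < t) :
    HasSum (fun k : ℕ => 2 * (exp (-((4 * k + 1) * t)) - exp (-((4 * k + 3) * t))))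
      (cosh t)⁻¹ := by
  have hr : exp (-(4 * t)) < 1 := exp_lt_one_iff.mpr (by linarith)
  have hgeom := (hasSum_geometric_of_lt_one (exp_pos _).le hr).mul_left
    (2 * (exp (-t) - exp (-(3 * t))))
  have hterm : ∀ k : ℕ, 2 * (exp (-t) - exp (-(3 * t))) * exp (-(4 * t)) ^ k =
      2 * (exp (-((4 * k + 1) * t)) - exp (-((4 * k + 3) * t))) := fun k => by
    rw [← exp_nat_mul, mul_assoc, sub_mul, ← exp_add, ← exp_add]; ring_nf
  have hsum : 2 * (exp (-t) - exp (-(3 * t))) * (1 - exp (-(4 * t)))⁻¹ = (cosh t)⁻¹ := by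
    have h3 : exp (-(3 * t)) = exp (-t) ^ 3 := by rw [← exp_nat_mul]; ring_nf
    have h4 : exp (-(4 * t)) = exp (-t) ^ 4 := by rw [← exp_nat_mul]; ring_nf
    have hcosh : cosh t = ((exp (-t))⁻¹ + exp (-t)) / 2 := by rw [cosh_eq, exp_neg, inv_inv]
    have h1 : 1 - exp (-t) ^ 4 ≠ 0 := by rw [← h4]; linarith
    rw [h3, h4, hcosh]
    field_simp
    ring
  simpa only [hterm, hsum] using hgeom

noncomputable def sechMellin (x : ℝ) : ℝ := ∫ t in Ioi 0, t ^ (x - 1) / cosh t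

theorem integrableOn_rpow_mul_exp_neg_mul {x r : ℝ} (hx : 0 < x) (hr : 0 < r) :
    IntegrableOn (fun t => t ^ (x - 1) * exp (-(r * t))) (Ioi 0) := by
  simpa only [rpow_one, neg_mul] using
    integrableOn_rpow_mul_exp_neg_mul_rpow (by linarith : -1 < x - 1) one_pos hr

theorem sechMellin_eq_of_hasSum {x ℓ : ℝ} (hx : 0 < x)
    (hℓ : HasSum (fun k : ℕ => (4 * k + 1 : ℝ) ^ (-x) - (4 * k + 3 : ℝ) ^ (-x)) ℓ) :
    sechMellin x = 2 * Gamma x * ℓ := by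
  set F : ℕ → ℝ → ℝ := fun k t =>
    2 * (t ^ (x - 1) * exp (-((4 * k + 1) * t)) - t ^ (x - 1) * exp (-((4 * k + 3) * t)))
  have hF_int (k : ℕ) : IntegrableOn (F k) (Ioi 0) :=
    ((integrableOn_rpow_mul_exp_neg_mul hx (by positivity)).sub
      (integrableOn_rpow_mul_exp_neg_mul hx (by positivity))).const_mul 2
  have hF_nonneg (k : ℕ) (t : ℝ) (ht : t ∈ Ioi 0) : 0 ≤ F k t := by
    have : exp (-((4 * k + 3) * t)) ≤ exp (-((4 * k + 1) * t)) :=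
      exp_le_exp.mpr (by nlinarith [ht.out])
    have := rpow_nonneg ht.out.le (x - 1)
    simp only [F]; nlinarith
  have hF (k : ℕ) : ∫ t in Ioi 0, F k t =
      2 * Gamma x * ((4 * k + 1 : ℝ) ^ (-x) - (4 * k + 3 : ℝ) ^ (-x)) := by
    simp only [F]
    rw [integral_const_mul, integral_sub (integrableOn_rpow_mul_exp_neg_mul hx (by positivity))
      (integrableOn_rpow_mul_exp_neg_mul hx (by positivity)),
      integral_rpow_mul_exp_neg_mul_Ioi hx (by positivity),
      integral_rpow_mul_exp_neg_mul_Ioi hx (by positivity), one_div, one_div,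
      inv_rpow (by positivity), inv_rpow (by positivity), ← rpow_neg (by positivity),
      ← rpow_neg (by positivity)]
    ring
  have hF_norm (k : ℕ) : ∫ t in Ioi 0, ‖F k t‖ = ∫ t in Ioi 0, F k t :=
    setIntegral_congr_fun measurableSet_Ioi fun t ht => norm_of_nonneg (hF_nonneg k t ht)
  have hsum := hasSum_integral_of_summable_integral_norm hF_int
    (by simpa only [hF_norm, hF] using (hℓ.mul_left (2 * Gamma x)).summable)
  have hpoint : ∀ t ∈ Ioi (0 : ℝ), ∑' k, F k t = t ^ (x - 1) / cosh t := fun t ht => by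
    rw [div_eq_mul_inv, ← ((hasSum_inv_cosh ht).mul_left (t ^ (x - 1))).tsum_eq]
    congr 1 with k
    ring
  rw [setIntegral_congr_fun measurableSet_Ioi hpoint] at hsum
  simp only [hF] at hsum
  exact hsum.unique (hℓ.mul_left _)

theorem integral_inv_cosh : ∫ t in Ioi 0, (cosh t)⁻¹ = π / 2 := by
  have hderiv (t : ℝ) : HasDerivAt (fun t => 2 * arctan (exp t)) (cosh t)⁻¹ t := by
    refine (((hasDerivAt_exp t).arctan).const_mul 2).congr_deriv ?_
    rw [cosh_eq, exp_neg]
    field_simp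
    ring
  have hlim : Tendsto (fun t => 2 * arctan (exp t)) atTop (𝓝 (2 * (π / 2))) :=
    ((tendsto_arctan_atTop.mono_right nhdsWithin_le_nhds).comp tendsto_exp_atTop).const_mul 2
  rw [integral_Ioi_of_hasDerivAt_of_nonneg' (fun t _ => hderiv t)
    (fun t _ => (inv_pos.mpr (cosh_pos t)).le) hlim, exp_zero, arctan_one]
  ring

theorem sechMellin_one : sechMellin 1 = π / 2 := by
  simp only [sechMellin, sub_self, rpow_zero, one_div, integral_inv_cosh]

theorem re_mellin_ofReal (g : ℝ → ℝ) (x : ℝ) :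
    (mellin (fun t => (g t : ℂ)) x).re = ∫ t in Ioi 0, t ^ (x - 1) * g t := by
  have hpoint : ∀ t ∈ Ioi (0 : ℝ),
      (t : ℂ) ^ ((x : ℂ) - 1) • (g t : ℂ) = ((t ^ (x - 1) * g t : ℝ) : ℂ) := by
    intro t ht
    rw [smul_eq_mul, Complex.ofReal_mul, Complex.ofReal_cpow ht.out.le]
    push_cast
    rfl
  rw [mellin, setIntegral_congr_fun measurableSet_Ioi hpoint, integral_complex_ofReal,
    Complex.ofReal_re]

theorem inv_cosh_isBigO_atTop (a : ℝ) : (fun t => (cosh t)⁻¹) =O[atTop] (· ^ a) := by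
  refine IsBigO.trans ?_ (isLittleO_exp_neg_mul_rpow_atTop one_pos a).isBigO
  refine IsBigO.of_bound 2 (Eventually.of_forall fun t => ?_)
  have hcosh : exp t / 2 ≤ cosh t := by rw [cosh_eq]; linarith [exp_pos (-t)]
  rw [norm_inv, norm_of_nonneg (cosh_pos t).le, norm_of_nonneg (exp_pos _).le, neg_one_mul,
    exp_neg, ← div_eq_mul_inv, ← inv_div]
  exact inv_anti₀ (by positivity) hcosh

theorem inv_cosh_isBigO_one (l : Filter ℝ) :
    (fun t => (cosh t)⁻¹) =O[l] (fun _ => (1 : ℝ)) := by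
  refine IsBigO.of_bound 1 (Eventually.of_forall fun t => ?_)
  rw [norm_inv, norm_one, one_mul, norm_of_nonneg (cosh_pos t).le]
  exact inv_le_one_of_one_le₀ (one_le_cosh t)

theorem hasDerivAt_sechMellin {x : ℝ} (hx : 0 < x) :
    HasDerivAt sechMellin (∫ t in Ioi 0, t ^ (x - 1) * (log t / cosh t)) x := by
  set f : ℝ → ℂ := fun t => ((cosh t)⁻¹ : ℝ)
  have hf : Continuous f :=
    Complex.continuous_ofReal.comp (continuous_cosh.inv₀ fun t => (cosh_pos t).ne')
  have hbot : f =O[𝓝[>] 0] (· ^ (-(0 : ℝ))) :=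
    Complex.isBigO_ofReal_left.mpr (by simpa using inv_cosh_isBigO_one (𝓝[>] 0))
  have key := (mellin_hasDerivAt_of_isBigO_rpow (s := x) (a := x + 1)
    (hf.continuousOn.locallyIntegrableOn measurableSet_Ioi)
    (Complex.isBigO_ofReal_left.mpr (inv_cosh_isBigO_atTop _)) (by simp)
    hbot (by simpa using hx)).2.real_of_complex
  have hlog : (fun t => log t • f t) = fun t => ((log t / cosh t : ℝ) : ℂ) := by
    ext t; simp [f, div_eq_mul_inv]
  simp only [hlog, f, re_mellin_ofReal, ← div_eq_mul_inv] at key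
  exact key

theorem tendsto_tsum_rpow_neg_sub_inv :
    Tendsto (fun s : ℝ => ∑' n : ℕ, ((n : ℝ) + 1) ^ (-s) - 1 / (s - 1)) (𝓝[>] 1)
      (𝓝 eulerMascheroniConstant) := by
  have h := (Complex.continuous_re.tendsto _).comp
    ZetaAsymptotics.tendsto_riemannZeta_sub_one_div_nhds_right
  rw [Complex.ofReal_re] at h
  refine h.congr' ?_
  filter_upwards [self_mem_nhdsWithin] with s (hs : 1 < s)
  rw [Function.comp_apply, zeta_eq_tsum_one_div_nat_add_one_cpow (by simpa using hs)]
  have hterm (n : ℕ) :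
      1 / ((n : ℂ) + 1) ^ (s : ℂ) = ((((n : ℝ) + 1) ^ (-s) : ℝ) : ℂ) := by
    rw [rpow_neg (by positivity), Complex.ofReal_inv, Complex.ofReal_cpow (by positivity),
      one_div]
    push_cast; rfl
  simp only [hterm, ← Complex.ofReal_tsum]
  norm_cast

theorem tendsto_pole_cancellation {Z h : ℝ → ℝ} {γ c h' : ℝ} (hc : c ≠ 0)
    (hZ : Tendsto (fun s => Z s - 1 / (s - 1)) (𝓝[>] 1) (𝓝 γ))
    (hh : HasDerivAt h h' 1) (h1 : h 1 = c) :
    Tendsto (fun s => (2 * c)⁻¹ * Z s * h s - Z (2 * s - 1)) (𝓝[>] 1)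
      (𝓝 (h' / (2 * c) - γ / 2)) := by
  have haffine : Tendsto (fun s : ℝ => 2 * s - 1) (𝓝[>] 1) (𝓝[>] 1) := by
    refine tendsto_nhdsWithin_iff.mpr ⟨?_, eventually_nhdsWithin_of_forall fun s hs => ?_⟩
    · exact ((continuous_const.mul continuous_id).sub continuous_const).tendsto' 1 1
        (by norm_num) |>.mono_left nhdsWithin_le_nhds
    · change 1 < 2 * s - 1; linarith [hs.out]
  have hslope : Tendsto (fun s => (h s - c) / (s - 1)) (𝓝[>] 1) (𝓝 h') := by
    refine ((hasDerivAt_iff_tendsto_slope.mp hh).mono_left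
      (nhdsWithin_mono _ fun s hs => ne_of_gt hs)).congr fun s => ?_
    rw [slope_def_field, h1]
  -- `(2c)⁻¹ Z h = (2c)⁻¹ ((Z - 1/(s-1)) h + (h - c)/(s-1)) + 1/(2(s-1))`, and `1/(2(s-1))` is
  -- also the pole of `Z (2s - 1)`.
  have hlim := ((hZ.mul (hh.continuousAt.tendsto.mono_left nhdsWithin_le_nhds)).add
    hslope).const_mul (2 * c)⁻¹ |>.sub (hZ.comp haffine)
  rw [h1, show (2 * c)⁻¹ * (γ * c + h') - γ = h' / (2 * c) - γ / 2 by field_simp; ring]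
    at hlim
  refine hlim.congr' ?_
  filter_upwards [self_mem_nhdsWithin] with s (hs : 1 < s)
  have : s - 1 ≠ 0 := by linarith
  have : 2 * s - 1 - 1 ≠ 0 := by linarith
  simp only [Function.comp_apply]
  field_simp
  ring

theorem zeta_L_limit :
    Filter.Tendsto
      (fun s : ℝ =>
        2 / Real.pi * (∑' n : ℕ, ((n : ℝ) + 1) ^ (-s)) *
            (∑' n : ℕ, chi4 (n + 1) * ((n : ℝ) + 1) ^ (-s)) -
          ∑' n : ℕ, ((n : ℝ) + 1) ^ (-(2 * s - 1)))
      (nhdsWithin 1 (Set.Ioi 1))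
      (nhds ((1 / Real.pi) * ∫ t in Set.Ioi (0 : ℝ), Real.log t / Real.cosh t)) := by
  set L : ℝ → ℝ := fun x => sechMellin x / (2 * Gamma x)
  set I := ∫ t in Ioi (0 : ℝ), log t / cosh t
  have hL : HasDerivAt L (I / 2 + π / 4 * eulerMascheroniConstant) 1 := by
    refine ((hasDerivAt_sechMellin one_pos).div (hasDerivAt_Gamma_one.const_mul 2)
      (by simp)).congr_deriv ?_
    simp only [sub_self, rpow_zero, one_mul, sechMellin_one, Gamma_one, I]
    ring
  have hL1 : L 1 = π / 4 := by simp only [L, sechMellin_one, Gamma_one]; ring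
  have hlim := tendsto_pole_cancellation (by positivity) tendsto_tsum_rpow_neg_sub_inv hL hL1
  rw [show (I / 2 + π / 4 * eulerMascheroniConstant) / (2 * (π / 4)) -
      eulerMascheroniConstant / 2 = 1 / π * I by field_simp; ring] at hlim
  refine hlim.congr' ?_
  filter_upwards [self_mem_nhdsWithin] with s (hs : 1 < s)
  have hΓ : Gamma s ≠ 0 := (Gamma_pos_of_pos (by linarith)).ne'
  simp only [L, sechMellin_eq_of_hasSum (by linarith) (hasSum_chi4_rpow hs)]
  field_simp
  ring
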